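/- For every α ∈ (0, 1/2], with p(u,w) = (1/(2π))·exp(−(u²+w²)/2) and q_α(u,w) = (1/(2π·√(1−α²)))·exp(−(u² − 2αuw + w²)/(2(1−α²))), the total variation distance satisfies (1/2)·∫_{ℝ²} |q_α(u,w) − p(u,w)| du dw ≤ α/√3. -/

import Mathlib

open MeasureTheory Real
open scoped ENNReal

/-- Density of the standard bivariate Gaussian `N(0, I₂)` on `ℝ²`. -/
noncomputable def pdens (uw : ℝ × ℝ) : ℝ :=
  (1 / (2 * π)) * Real.exp (-(uw.1 ^ 2 + uw.2 ^ 2) / 2)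

/-- Density of the centered bivariate Gaussian with unit marginal variances and
correlation `α` (covariance matrix `[[1, α], [α, 1]]`) on `ℝ²`. -/
noncomputable def qdens (α : ℝ) (uw : ℝ × ℝ) : ℝ :=
  (1 / (2 * π * Real.sqrt (1 - α ^ 2))) *
    Real.exp (-(uw.1 ^ 2 - 2 * α * uw.1 * uw.2 + uw.2 ^ 2) / (2 * (1 - α ^ 2)))

lemma gauss1 (a : ℝ) (ha : 0 < a) :
    ∫⁻ x : ℝ, ENNReal.ofReal (Real.exp (-(a * x ^ 2))) = ENNReal.ofReal (Real.sqrt (π / a)) := by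
  rw [← ofReal_integral_eq_lintegral_ofReal]
  · congr 1
    simpa [neg_mul] using integral_gaussian a
  · simpa [neg_mul] using integrable_exp_neg_mul_sq ha
  · exact Filter.Eventually.of_forall fun x => (Real.exp_pos _).le

lemma gauss2 (A B C : ℝ) (hA : 0 < A) (hD : 0 < B - C ^ 2 / (4 * A)) :
    ∫⁻ uv : ℝ × ℝ, ENNReal.ofReal
        (Real.exp (-(A * uv.1 ^ 2 + C * uv.1 * uv.2 + B * uv.2 ^ 2))) ∂volume
      = ENNReal.ofReal (π / Real.sqrt (A * B - C ^ 2 / 4)) := by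
  set D : ℝ := B - C ^ 2 / (4 * A) with hDdef
  have hcont : Measurable fun uv : ℝ × ℝ =>
      ENNReal.ofReal (Real.exp (-(A * uv.1 ^ 2 + C * uv.1 * uv.2 + B * uv.2 ^ 2))) := by
    fun_prop
  rw [MeasureTheory.Measure.volume_eq_prod, lintegral_prod_symm' _ hcont]
  have key : ∀ v : ℝ, ∫⁻ u : ℝ, ENNReal.ofReal
        (Real.exp (-(A * u ^ 2 + C * u * v + B * v ^ 2)))
      = ENNReal.ofReal (Real.exp (-(D * v ^ 2))) * ENNReal.ofReal (Real.sqrt (π / A)) := by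
    intro v
    have hexp : ∀ u : ℝ, Real.exp (-(A * u ^ 2 + C * u * v + B * v ^ 2))
        = Real.exp (-(D * v ^ 2)) * Real.exp (-(A * (u + C * v / (2 * A)) ^ 2)) := by
      intro u
      rw [← Real.exp_add]
      congr 1
      rw [hDdef]
      field_simp [hDdef]
      ring
    simp_rw [hexp, ENNReal.ofReal_mul (Real.exp_pos _).le]
    rw [lintegral_const_mul _ (by fun_prop)]
    congr 1
    have := lintegral_add_right_eq_self
      (μ := (volume : Measure ℝ))
      (fun u : ℝ => ENNReal.ofReal (Real.exp (-(A * u ^ 2)))) (C * v / (2 * A))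
    rw [this, gauss1 A hA]
  simp_rw [key]
  rw [lintegral_mul_const _ (by fun_prop), gauss1 D hD]
  rw [← ENNReal.ofReal_mul (Real.sqrt_nonneg _)]
  congr 1
  rw [← Real.sqrt_mul (by positivity)]
  rw [show π / D * (π / A) = π ^ 2 / (A * D) by field_simp]
  rw [Real.sqrt_div (by positivity) (A * D), Real.sqrt_sq pi_pos.le]
  rw [show A * D = A * B - C ^ 2 / 4 by rw [hDdef]; field_simp]

lemma gauss2' (c A B C : ℝ) (hc : 0 ≤ c) (hA : 0 < A) (hD : 0 < B - C ^ 2 / (4 * A)) :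
    ∫⁻ uv : ℝ × ℝ, ENNReal.ofReal
        (c * Real.exp (-(A * uv.1 ^ 2 + C * uv.1 * uv.2 + B * uv.2 ^ 2))) ∂volume
      = ENNReal.ofReal (c * (π / Real.sqrt (A * B - C ^ 2 / 4))) := by
  simp_rw [ENNReal.ofReal_mul hc]
  rw [lintegral_const_mul _ (by fun_prop), gauss2 A B C hA hD]

section main

variable {α : ℝ}

lemma s_pos (h0 : 0 < α) (h1 : α ≤ 1 / 2) : 0 < 1 - α ^ 2 := by nlinarith

lemma pdens_pos (uw : ℝ × ℝ) : 0 < pdens uw := by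
  unfold pdens; positivity

lemma pdens_cont : Continuous pdens := by unfold pdens; fun_prop

lemma qdens_cont : Continuous (qdens α) := by unfold qdens; fun_prop

lemma intp : ∫⁻ uw : ℝ × ℝ, ENNReal.ofReal (pdens uw) ∂volume = 1 := by
  have hp : ∀ uw : ℝ × ℝ, pdens uw
      = (1 / (2 * π)) * Real.exp (-((1/2) * uw.1 ^ 2 + 0 * uw.1 * uw.2 + (1/2) * uw.2 ^ 2)) := by
    intro uw; unfold pdens; congr 1; ring_nf
  simp_rw [hp]
  rw [gauss2' _ _ _ _ (by positivity) (by norm_num) (by norm_num)]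
  rw [show (1:ℝ)/2 * (1/2) - 0 ^ 2 / 4 = (1/2)^2 by norm_num, Real.sqrt_sq (by norm_num)]
  rw [show 1 / (2 * π) * (π / (1/2)) = 1 by field_simp]
  exact ENNReal.ofReal_one

lemma intq (h0 : 0 < α) (h1 : α ≤ 1 / 2) :
    ∫⁻ uw : ℝ × ℝ, ENNReal.ofReal (qdens α uw) ∂volume = 1 := by
  have hs := s_pos h0 h1
  set s : ℝ := 1 - α ^ 2 with hsdef
  have hq : ∀ uw : ℝ × ℝ, qdens α uw
      = (1 / (2 * π * Real.sqrt s)) *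
        Real.exp (-((1/(2*s)) * uw.1 ^ 2 + (-α/s) * uw.1 * uw.2 + (1/(2*s)) * uw.2 ^ 2)) := by
    intro uw; unfold qdens; rw [← hsdef]; congr 1; field_simp; ring
  simp_rw [hq]
  have hD : (0:ℝ) < 1/(2*s) - (-α/s) ^ 2 / (4 * (1/(2*s))) := by
    rw [show 1/(2*s) - (-α/s) ^ 2 / (4 * (1/(2*s))) = (1 - α^2) / (2 * s) by field_simp; ring,
      ← hsdef]
    positivity
  rw [gauss2' _ _ _ _ (by positivity) (by positivity) hD]
  rw [show 1/(2*s) * (1/(2*s)) - (-α/s) ^ 2 / 4 = (1-α^2)/(4*s^2) by field_simp; ring, ← hsdef]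
  rw [show s / (4 * s^2) = (1 / (2 * Real.sqrt s))^2 by
    rw [div_pow, mul_pow, Real.sq_sqrt hs.le]; field_simp; ring]
  rw [Real.sqrt_sq (by positivity)]
  rw [show 1 / (2 * π * Real.sqrt s) * (π / (1 / (2 * Real.sqrt s))) = 1 by
    have : Real.sqrt s ≠ 0 := by positivity
    field_simp]
  exact ENNReal.ofReal_one

lemma intq2p (h0 : 0 < α) (h1 : α ≤ 1 / 2) :
    ∫⁻ uw : ℝ × ℝ, ENNReal.ofReal ((qdens α uw) ^ 2 / pdens uw) ∂volume
      = ENNReal.ofReal (1 / (1 - α ^ 2)) := by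
  have hs := s_pos h0 h1
  set s : ℝ := 1 - α ^ 2 with hsdef
  have hr : ∀ uw : ℝ × ℝ, (qdens α uw) ^ 2 / pdens uw
      = (1 / (2 * π * s)) *
        Real.exp (-(((1+α^2)/(2*s)) * uw.1 ^ 2 + (-2*α/s) * uw.1 * uw.2
          + ((1+α^2)/(2*s)) * uw.2 ^ 2)) := by
    intro uw
    rw [div_eq_iff (pdens_pos uw).ne']
    unfold qdens pdens
    rw [← hsdef, mul_pow, ← Real.exp_nat_mul]
    rw [show (1 / (2 * π * Real.sqrt s)) ^ 2 = 1 / (4 * π^2 * s) by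
      rw [div_pow, mul_pow, mul_pow, Real.sq_sqrt hs.le]; norm_num]
    rw [mul_mul_mul_comm, ← Real.exp_add]
    rw [show 1 / (2 * π * s) * (1 / (2 * π)) = 1 / (4 * π^2 * s) by field_simp; ring]
    congr 1
    field_simp
    congr 1; rw [hsdef]; ring
  simp_rw [hr]
  have hA : (0:ℝ) < (1+α^2)/(2*s) := by positivity
  have hD : (0:ℝ) < (1+α^2)/(2*s) - (-2*α/s) ^ 2 / (4 * ((1+α^2)/(2*s))) := by
    rw [show (1+α^2)/(2*s) - (-2*α/s) ^ 2 / (4 * ((1+α^2)/(2*s)))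
        = ((1+α^2)^2 - 4*α^2) / (2 * s * (1+α^2)) by field_simp; ring]
    have : (1+α^2)^2 - 4*α^2 = s^2 := by rw [hsdef]; ring
    rw [this]; positivity
  rw [gauss2' _ _ _ _ (by positivity) hA hD]
  rw [show (1+α^2)/(2*s) * ((1+α^2)/(2*s)) - (-2*α/s) ^ 2 / 4 = ((1+α^2)^2 - 4*α^2)/(4*s^2) by
    field_simp; ring]
  rw [show ((1+α^2)^2 - 4*α^2)/(4*s^2) = ((1:ℝ)/2)^2 by
    rw [show (1+α^2)^2 - 4*α^2 = s^2 by rw [hsdef]; ring]; field_simp; ring]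
  rw [Real.sqrt_sq (by norm_num)]
  congr 1
  have hπ : π ≠ 0 := pi_ne_zero
  rw [show π / ((1:ℝ)/2) = 2 * π by field_simp]
  field_simp

lemma chisq (h0 : 0 < α) (h1 : α ≤ 1 / 2) :
    ∫⁻ uw : ℝ × ℝ, ENNReal.ofReal ((qdens α uw - pdens uw) ^ 2 / pdens uw) ∂volume
      = ENNReal.ofReal (α ^ 2 / (1 - α ^ 2)) := by
  have hs := s_pos h0 h1
  have hmq : Measurable fun uw : ℝ × ℝ => ENNReal.ofReal (2 * qdens α uw) :=
    ((continuous_const.mul qdens_cont).measurable).ennreal_ofReal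
  have hmr : Measurable fun uw : ℝ × ℝ => ENNReal.ofReal ((qdens α uw) ^ 2 / pdens uw) :=
    (((qdens_cont.pow 2).div pdens_cont fun uw => (pdens_pos uw).ne').measurable).ennreal_ofReal
  have key : (∫⁻ uw : ℝ × ℝ, ENNReal.ofReal ((qdens α uw - pdens uw) ^ 2 / pdens uw) ∂volume)
      + 2 = ENNReal.ofReal (α ^ 2 / (1 - α ^ 2)) + 2 := by
    have h2 : (2:ℝ≥0∞) = ∫⁻ uw : ℝ × ℝ, ENNReal.ofReal (2 * qdens α uw) ∂volume := by
      simp_rw [ENNReal.ofReal_mul (by norm_num : (0:ℝ) ≤ 2)]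
      rw [lintegral_const_mul _ (qdens_cont.measurable.ennreal_ofReal), intq h0 h1]
      simp [ENNReal.ofReal_ofNat]
    nth_rewrite 1 [h2]
    rw [← lintegral_add_right _ hmq]
    have hpt : ∀ uw : ℝ × ℝ,
        ENNReal.ofReal ((qdens α uw - pdens uw) ^ 2 / pdens uw) + ENNReal.ofReal (2 * qdens α uw)
        = ENNReal.ofReal ((qdens α uw) ^ 2 / pdens uw) + ENNReal.ofReal (pdens uw) := by
      intro uw
      have hp := pdens_pos uw
      have hq : 0 ≤ qdens α uw := by
        unfold qdens
        have : 0 ≤ Real.sqrt (1 - α^2) := Real.sqrt_nonneg _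
        positivity
      rw [← ENNReal.ofReal_add (by positivity) (by positivity),
        ← ENNReal.ofReal_add (by positivity) hp.le]
      congr 1
      field_simp
      ring
    simp_rw [hpt]
    rw [lintegral_add_right _ (pdens_cont.measurable.ennreal_ofReal), intq2p h0 h1, intp]
    rw [show ENNReal.ofReal (1 / (1 - α ^ 2)) = ENNReal.ofReal (α ^ 2 / (1 - α ^ 2)) + 1 by
      rw [← ENNReal.ofReal_one, ← ENNReal.ofReal_add (by positivity) (by norm_num)]
      congr 1
      field_simp; ring]
    ring
  exact WithTop.add_right_cancel (by exact ENNReal.ofNat_ne_top) key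

/-- total variation bound between correlated bivariate Gaussians.
For every `α ∈ (0, 1/2]`, the total variation distance
`(1/2)·∫ |q_α − p|` is at most `α/√3`. -/
theorem stmt_16 (α : ℝ) (h0 : 0 < α) (h1 : α ≤ 1 / 2) :
    (1 / 2 : ℝ≥0∞) * ∫⁻ uw : ℝ × ℝ, ENNReal.ofReal |qdens α uw - pdens uw| ∂volume
      ≤ ENNReal.ofReal (α / Real.sqrt 3) := by
  have hs : 0 < 1 - α ^ 2 := s_pos h0 h1
  set f : ℝ × ℝ → ℝ≥0∞ := fun uw =>
    ENNReal.ofReal (|qdens α uw - pdens uw| / Real.sqrt (pdens uw)) with hf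
  set g : ℝ × ℝ → ℝ≥0∞ := fun uw => ENNReal.ofReal (Real.sqrt (pdens uw)) with hg
  have hfg : ∀ uw : ℝ × ℝ, (f * g) uw = ENNReal.ofReal |qdens α uw - pdens uw| := by
    intro uw
    have hp := pdens_pos uw
    have hsp : (0:ℝ) < Real.sqrt (pdens uw) := Real.sqrt_pos.mpr hp
    show ENNReal.ofReal (|qdens α uw - pdens uw| / Real.sqrt (pdens uw))
        * ENNReal.ofReal (Real.sqrt (pdens uw)) = _
    rw [← ENNReal.ofReal_mul (by positivity), div_mul_cancel₀ _ hsp.ne']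
  have hfm : AEMeasurable f volume := by
    apply Measurable.aemeasurable
    apply Measurable.ennreal_ofReal
    exact (((qdens_cont.sub pdens_cont).abs).div (pdens_cont.sqrt)
      fun uw => (Real.sqrt_pos.mpr (pdens_pos uw)).ne').measurable
  have hgm : AEMeasurable g volume := by
    exact (pdens_cont.sqrt.measurable.ennreal_ofReal).aemeasurable
  have holder := ENNReal.lintegral_mul_le_Lp_mul_Lq (volume : Measure (ℝ × ℝ))
    (Real.HolderConjugate.two_two) hfm hgm
  have hf2 : ∀ uw : ℝ × ℝ, f uw ^ (2:ℝ)
      = ENNReal.ofReal ((qdens α uw - pdens uw) ^ 2 / pdens uw) := by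
    intro uw
    have hp := pdens_pos uw
    simp only [hf]
    rw [ENNReal.ofReal_rpow_of_nonneg (by positivity) (by norm_num)]
    congr 1
    rw [Real.rpow_two, div_pow, sq_abs, Real.sq_sqrt hp.le]
  have hg2 : ∀ uw : ℝ × ℝ, g uw ^ (2:ℝ) = ENNReal.ofReal (pdens uw) := by
    intro uw
    simp only [hg]
    rw [ENNReal.ofReal_rpow_of_nonneg (Real.sqrt_nonneg _) (by norm_num)]
    congr 1
    rw [Real.rpow_two, Real.sq_sqrt (pdens_pos uw).le]
  simp_rw [hfg, hf2, hg2] at holder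
  rw [chisq h0 h1, intp] at holder
  rw [ENNReal.one_rpow, mul_one] at holder
  have hbound : ENNReal.ofReal (α ^ 2 / (1 - α ^ 2)) ^ ((1:ℝ)/2)
      = ENNReal.ofReal (α / Real.sqrt (1 - α ^ 2)) := by
    rw [ENNReal.ofReal_rpow_of_nonneg (by positivity) (by norm_num)]
    congr 1
    rw [← Real.sqrt_eq_rpow, Real.sqrt_div (by positivity), Real.sqrt_sq h0.le]
  rw [hbound] at holder
  calc (1 / 2 : ℝ≥0∞) * ∫⁻ uw : ℝ × ℝ, ENNReal.ofReal |qdens α uw - pdens uw| ∂volume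
      ≤ (1 / 2 : ℝ≥0∞) * ENNReal.ofReal (α / Real.sqrt (1 - α ^ 2)) := by
        exact mul_le_mul_right holder _
    _ ≤ ENNReal.ofReal (α / Real.sqrt 3) := by
        rw [show (1/2 : ℝ≥0∞) = ENNReal.ofReal (1/2) by
          rw [ENNReal.ofReal_div_of_pos (by norm_num), ENNReal.ofReal_one,
            ENNReal.ofReal_ofNat]]
        rw [← ENNReal.ofReal_mul (by norm_num)]
        apply ENNReal.ofReal_le_ofReal
        have h3 : Real.sqrt 3 ≤ 2 * Real.sqrt (1 - α ^ 2) := by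
          rw [show (2:ℝ) * Real.sqrt (1 - α ^ 2) = Real.sqrt (4 * (1 - α ^ 2)) by
            rw [Real.sqrt_mul (by norm_num), show Real.sqrt 4 = 2 by
              rw [show (4:ℝ) = 2^2 by norm_num, Real.sqrt_sq (by norm_num)]]]
          apply Real.sqrt_le_sqrt
          nlinarith
        have hsp : (0:ℝ) < Real.sqrt (1 - α ^ 2) := Real.sqrt_pos.mpr hs
        have h3p : (0:ℝ) < Real.sqrt 3 := by positivity
        rw [show (1:ℝ)/2 * (α / Real.sqrt (1 - α ^ 2)) = α / (2 * Real.sqrt (1 - α ^ 2)) by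
          ring]
        exact div_le_div_of_nonneg_left h0.le h3p h3

end main
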